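/- arXiv:1907.05772 — 3 statements merged into one kernel-verified Lean document; each statement's English description precedes it below -/
import Mathlib

section
/- Let L ∈ [0,1]^{k×d} and Σ a finite set, Φ ∈ Σ^{k×d}. Assume: no two distinct rows of L are equal (no duplicate actions); every action a ∈ [k] is Pareto optimal, i.e. dim(C_a) = d−1; and the game is locally observable, i.e. for every pair of neighbouring actions (a,b) ∈ E there exist functions w_a, w_b : Σ → ℝ with L_{a,x} − L_{b,x} = w_a(Φ_{a,x}) + w_b(Φ_{b,x}) for all x ∈ [d]. Then for every ν ∈ D and every probability vector q ∈ ℝ^k there exists a probability vector r ∈ ℝ^k such that: (a) (r − q)ᵀ L ν ≤ 0; (b) r_a ≥ q_a / k for all a ∈ [k]; and (c) there exists an in-tree T on [k] with T ⊆ E such that r_a ≤ r_b for all (a,b) ∈ T. -/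
/-!
Move `ν` to a nearby point `μ` of the simplex at which all losses are distinct and every strict
inequality between losses at `ν` persists. If `a` is not optimal at `μ`, walk from a point `p` of
the cell of `a` towards `μ` and stop where a better action `b` first ties with `a`: that point lies
in both cells. As the cell of `a` has dimension `d - 1`, `p` can be chosen off the affine spans of
`μ` with the faces of dimension `< d - 2`, so the common face of `a` and `b` has dimension `d - 2`
and `b` is a neighbour. Sending every action to such a neighbour gives an in-tree rooted at the
optimal action, along which the loss at `ν` does not increase. Now let every action keep a `1/k`
share of the `q`-mass of its subtree and give the rest to the root: mass only moves towards the
root, hence towards smaller loss, and the shares grow towards the root.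
-/

structure InTree (V : Type*) [Fintype V] [DecidableEq V] where
  root : V
  par : V → V
  par_root : par root = root
  reaches : ∀ v : V, ∃ n : ℕ, par^[n] v = root

def InTree.edges {V : Type*} [Fintype V] [DecidableEq V] (T : InTree V) :
    Finset (V × V) :=
  (Finset.univ.filter (fun v => v ≠ T.root)).image (fun v => (v, T.par v))

def simplexD (d : ℕ) : Set (Fin d → ℝ) :=
  {ν | (∀ x, ν x ∈ Set.Icc (0 : ℝ) 1) ∧ ∑ x, ν x = 1}

def cell {k d : ℕ} (L : Fin k → Fin d → ℝ) (a : Fin k) : Set (Fin d → ℝ) :=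
  {ν ∈ simplexD d | ∀ b : Fin k, ∑ x, L a x * ν x ≤ ∑ x, L b x * ν x}

noncomputable def sdim {d : ℕ} (C : Set (Fin d → ℝ)) : ℕ :=
  Module.finrank ℝ (affineSpan ℝ C).direction

def Neighbours {k d : ℕ} (L : Fin k → Fin d → ℝ) (a b : Fin k) : Prop :=
  a ≠ b ∧ sdim (cell L a) = d - 1 ∧ sdim (cell L b) = d - 1 ∧
    sdim (cell L a ∩ cell L b) = d - 2

open Finset Matrix AffineMap Filter Topology Module

theorem AffineSubspace.lineMap_mem_of_lineMap_mem {k E : Type*} [Field k] [AddCommGroup E]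
    [Module k E] {S : AffineSubspace k E} {p q : E} {t₁ t₂ : k}
    (h₁ : lineMap p q t₁ ∈ S) (h₂ : lineMap p q t₂ ∈ S) (hne : t₁ ≠ t₂) (t : k) :
    lineMap p q t ∈ S := by
  convert lineMap_mem ((t - t₁) / (t₂ - t₁)) h₁ h₂ using 1
  have : t₂ - t₁ ≠ 0 := sub_ne_zero.2 hne.symm
  simp only [lineMap_apply_module']
  match_scalars <;> field_simp <;> ring

theorem Convex.exists_mem_forall_notMem {𝕜 E ι : Type*} [Field 𝕜] [LinearOrder 𝕜]
    [IsStrictOrderedRing 𝕜] [AddCommGroup E] [Module 𝕜 E] {C : Set E} (hC : Convex 𝕜 C)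
    (hne : C.Nonempty) (S : ι → AffineSubspace 𝕜 E) (s : Finset ι)
    (h : ∀ i ∈ s, ¬ C ⊆ S i) : ∃ p ∈ C, ∀ i ∈ s, p ∉ S i := by
  classical
  induction s using Finset.induction_on with
  | empty => exact hne.imp fun p hp => ⟨hp, by simp⟩
  | insert i s _ ih =>
    obtain ⟨p, hpC, hps⟩ := ih fun j hj => h j (mem_insert_of_mem hj)
    by_cases hpi : p ∉ S i
    · exact ⟨p, hpC, forall_mem_insert _ _ _ |>.2 ⟨hpi, hps⟩⟩
    obtain ⟨q, hqC, hqi⟩ := Set.not_subset.1 (h i (mem_insert_self i s))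
    -- each `S j` with `j ∈ s` misses `p`, hence meets the line through `p` and `q` at most once
    have hbad : (⋃ j ∈ s, {t : 𝕜 | lineMap p q t ∈ S j}).Finite :=
      s.finite_toSet.biUnion fun j hj => Set.Subsingleton.finite fun t₁ h₁ t₂ h₂ =>
        by_contra fun hne => hps j hj <| by
          simpa using AffineSubspace.lineMap_mem_of_lineMap_mem h₁ h₂ hne 0
    obtain ⟨t, ⟨ht₀, ht₁⟩, ht⟩ := ((Set.Ioc_infinite (zero_lt_one' 𝕜)).sdiff hbad).nonempty
    refine ⟨lineMap p q t, hC.lineMap_mem hpC hqC ⟨ht₀.le, ht₁⟩,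
      forall_mem_insert _ _ _ |>.2 ⟨fun hti => hqi ?_, fun j hj htj => ht ?_⟩⟩
    · simpa using AffineSubspace.lineMap_mem_of_lineMap_mem (t₁ := 0) (by simpa using hpi)
        hti ht₀.ne 1
    · exact Set.mem_biUnion hj htj

theorem vectorSpan_le_ker_of_forall_eq {K E F : Type*} [Field K] [AddCommGroup E] [Module K E]
    [AddCommGroup F] [Module K F] (f : E →ₗ[K] F) {X : Set E} {c : F}
    (h : ∀ x ∈ X, f x = c) : vectorSpan K X ≤ LinearMap.ker f := by
  rw [vectorSpan_def, Submodule.span_le]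
  rintro _ ⟨x, hx, y, hy, rfl⟩
  simp [h x hx, h y hy]

theorem Matrix.finrank_ker_mulVecLin_of_linearIndependent {K m n : Type*} [Field K]
    [Fintype m] [Fintype n] {M : Matrix m n K} (hM : LinearIndependent K M) :
    finrank K (LinearMap.ker M.mulVecLin) = Fintype.card n - Fintype.card m := by
  have hrank : finrank K (LinearMap.range M.mulVecLin) = Fintype.card m := by
    rw [← Matrix.rank, rank_eq_finrank_span_row]
    exact finrank_span_eq_card hM
  have := LinearMap.finrank_range_add_finrank_ker M.mulVecLin
  rw [finrank_fintype_fun_eq_card] at this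
  omega

theorem exists_mem_stdSimplex_injective_dotProduct {ι n : Type*} [Fintype ι] [Fintype n]
    [Nonempty n] {w : ι → n → ℝ} (hw : Function.Injective w) :
    ∃ ν ∈ stdSimplex ℝ n, Function.Injective fun i => w i ⬝ᵥ ν := by
  classical
  let H : ι × ι → AffineSubspace ℝ (n → ℝ) := fun ij =>
    (LinearMap.ker (dotProductEquiv ℝ n (w ij.1 - w ij.2))).toAffineSubspace
  have hH {ν : n → ℝ} {i j : ι} : ν ∈ H (i, j) ↔ w i ⬝ᵥ ν = w j ⬝ᵥ ν := by
    simp [H, sub_eq_zero]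
  obtain ⟨ν, hν, hνH⟩ := (convex_stdSimplex ℝ n).exists_mem_forall_notMem
    ⟨_, single_mem_stdSimplex ℝ (Classical.arbitrary n)⟩ H {ij | ij.1 ≠ ij.2}
    fun ij hij hsub => (mem_filter.1 hij).2 <| hw <| funext fun x => by
      simpa using hH.1 (hsub (single_mem_stdSimplex ℝ x))
  exact ⟨ν, hν, fun i j hij => by_contra fun hne => hνH (i, j) (by simpa using hne) (hH.2 hij)⟩

theorem exists_perturbation_injective_of_lt {ι : Type*} [Finite ι] (u v : ι → ℝ)
    (hv : Function.Injective v) :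
    ∃ ε ∈ Set.Ioo (0 : ℝ) 1, Function.Injective (fun i => (1 - ε) * u i + ε * v i) ∧
      ∀ i j, u i < u j → (1 - ε) * u i + ε * v i < (1 - ε) * u j + ε * v j := by
  have hlt : ∀ i j, ∀ᶠ ε in 𝓝[>] (0 : ℝ),
      u i < u j → (1 - ε) * u i + ε * v i < (1 - ε) * u j + ε * v j := by
    intro i j
    by_cases hij : u i < u j
    · have : ∀ᶠ ε in 𝓝 (0 : ℝ), (1 - ε) * u i + ε * v i < (1 - ε) * u j + ε * v j :=
        ContinuousAt.eventually_lt (by fun_prop) (by fun_prop) (by simpa using hij)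
      exact (this.filter_mono nhdsWithin_le_nhds).mono fun _ h _ => h
    · exact Eventually.of_forall fun _ h => absurd h hij
  have hIoo : ∀ᶠ ε in 𝓝[>] (0 : ℝ), ε ∈ Set.Ioo 0 1 := Ioo_mem_nhdsGT one_pos
  obtain ⟨ε, hε, hεlt⟩ :=
    (hIoo.and (eventually_all.2 fun i => eventually_all.2 (hlt i))).exists
  refine ⟨ε, hε, fun i j hij => ?_, hεlt⟩
  by_contra hne
  rcases lt_trichotomy (u i) (u j) with h | h | h
  · exact (hεlt i j h).ne hij
  · exact hne (hv (mul_left_cancel₀ hε.1.ne' (by simpa [h] using hij)))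
  · exact (hεlt j i h).ne' hij

theorem exists_first_zero_of_affine {ι : Type*} [Fintype ι] (A B : ι → ℝ) (hA : ∀ i, 0 ≤ A i)
    (hB : ∃ i, B i < 0) : ∃ t ∈ Set.Ico (0 : ℝ) 1, ∃ i, B i < 0 ∧
      (1 - t) * A i + t * B i = 0 ∧ ∀ j, 0 ≤ (1 - t) * A j + t * B j := by
  classical
  -- `t` is the smallest of the zeros `A i / (A i - B i)` of the decreasing functions
  obtain ⟨i, hi, hmin⟩ := exists_min_image {i | B i < 0} (fun i => A i / (A i - B i))
    (by simpa [Finset.Nonempty] using hB)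
  simp only [mem_filter, mem_univ, true_and] at hi hmin
  have hpos : 0 < A i - B i := by linarith [hA i]
  have ht₀ : 0 ≤ A i / (A i - B i) := div_nonneg (hA i) hpos.le
  refine ⟨A i / (A i - B i), ⟨ht₀, (div_lt_one hpos).2 (by linarith)⟩, i, hi,
    by field_simp; ring, fun j => ?_⟩
  have ht : A i / (A i - B i) ≤ 1 := (div_le_one hpos).2 (by linarith)
  rcases lt_or_ge (B j) 0 with hj | hj
  · have hpos' : 0 < A j - B j := by linarith [hA j]
    have := (le_div_iff₀ hpos').1 (hmin j hj)
    nlinarith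
  · nlinarith [hA j]

theorem dotProduct_lineMap {n : Type*} [Fintype n] (w p q : n → ℝ) (t : ℝ) :
    w ⬝ᵥ lineMap p q t = (1 - t) * (w ⬝ᵥ p) + t * (w ⬝ᵥ q) := by
  simp [lineMap_apply_module, dotProduct_add, dotProduct_smul]

theorem sum_sum_div_card_le {ι : Type*} [Fintype ι] [Nonempty ι] (s : ι → Finset ι)
    {g : ι → ℝ} (hg : ∀ i, 0 ≤ g i) : ∑ i, (∑ j ∈ s i, g j) / Fintype.card ι ≤ ∑ j, g j :=
  calc ∑ i, (∑ j ∈ s i, g j) / Fintype.card ι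
      ≤ ∑ _i : ι, (∑ j, g j) / Fintype.card ι := sum_le_sum fun i _ =>
        div_le_div_of_nonneg_right (sum_le_sum_of_subset_of_nonneg (subset_univ _)
          fun j _ _ => hg j) (Nat.cast_nonneg _)
    _ = ∑ j, g j := by
        rw [sum_const, card_univ, nsmul_eq_mul]
        field_simp

namespace InTree

variable {V : Type*} [Fintype V] [DecidableEq V]

theorem exists_of_forall_exists_lt {β : Type*} [Preorder β] (P : V → V → Prop) (f : V → β)
    (root : V) (h : ∀ v ≠ root, ∃ w, P v w ∧ f w < f v) :
    ∃ T : InTree V, T.root = root ∧ ∀ v ≠ T.root, P v (T.par v) ∧ f (T.par v) < f v := by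
  let par v := if hv : v = root then root else (h v hv).choose
  have hpar : ∀ v ≠ root, P v (par v) ∧ f (par v) < f v := fun v hv => by
    simpa [par, hv] using (h v hv).choose_spec
  have : IsTrans V (fun w v => f w < f v) := ⟨fun _ _ _ => lt_trans⟩
  have : Std.Irrefl (fun w v : V => f w < f v) := ⟨fun _ => lt_irrefl _⟩
  have hreach (v : V) : ∃ n, par^[n] v = root :=
    (Finite.wellFounded_of_trans_of_irrefl (fun w v : V => f w < f v)).induction
      (C := fun v => ∃ n, par^[n] v = root) v fun v ih => by
      by_cases hv : v = root
      · exact ⟨0, hv⟩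
      · obtain ⟨n, hn⟩ := ih _ (hpar v hv).2
        exact ⟨n + 1, hn⟩
  exact ⟨⟨root, par, by simp [par], hreach⟩, rfl, hpar⟩

theorem forall_mem_edges (T : InTree V) {P : V → V → Prop} :
    (∀ e ∈ T.edges, P e.1 e.2) ↔ ∀ v ≠ T.root, P v (T.par v) := by
  simp [edges]

open Classical in
noncomputable def subtree (T : InTree V) (a : V) : Finset V := {b | ∃ n, T.par^[n] b = a}

noncomputable def subtreeShare (T : InTree V) (q : V → ℝ) (a : V) : ℝ :=
  (∑ b ∈ T.subtree a, q b) / Fintype.card V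

variable {T : InTree V}

theorem mem_subtree_self (a : V) : a ∈ T.subtree a := by
  simpa [subtree] using ⟨0, rfl⟩

theorem mem_subtree_root (v : V) : v ∈ T.subtree T.root := by
  simpa [subtree] using T.reaches v

theorem subtree_subset_subtree_par (a : V) : T.subtree a ⊆ T.subtree (T.par a) := by
  intro b
  simp only [subtree, mem_filter, mem_univ, true_and]
  rintro ⟨n, rfl⟩
  exact ⟨n + 1, Function.iterate_succ_apply' ..⟩

theorem le_of_mem_subtree {β : Type*} [Preorder β] {ℓ : V → β} (hℓ : ∀ v, ℓ (T.par v) ≤ ℓ v)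
    {a b : V} (hb : b ∈ T.subtree a) : ℓ a ≤ ℓ b := by
  obtain ⟨n, rfl⟩ := by simpa [subtree] using hb
  exact antitone_nat_of_succ_le (f := fun n => ℓ (T.par^[n] b))
    (fun n => by simpa only [Function.iterate_succ_apply'] using hℓ _) (Nat.zero_le n)

variable {q : V → ℝ}

theorem subtreeShare_nonneg (hq : ∀ v, 0 ≤ q v) (a : V) : 0 ≤ T.subtreeShare q a :=
  div_nonneg (sum_nonneg fun b _ => hq b) (Nat.cast_nonneg _)

theorem subtreeShare_le_subtreeShare_par (hq : ∀ v, 0 ≤ q v) (a : V) :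
    T.subtreeShare q a ≤ T.subtreeShare q (T.par a) :=
  div_le_div_of_nonneg_right (sum_le_sum_of_subset_of_nonneg (subtree_subset_subtree_par a)
    fun b _ _ => hq b) (Nat.cast_nonneg _)

theorem div_card_le_subtreeShare (hq : ∀ v, 0 ≤ q v) (a : V) :
    q a / Fintype.card V ≤ T.subtreeShare q a :=
  div_le_div_of_nonneg_right (single_le_sum (fun b _ => hq b) (mem_subtree_self a))
    (Nat.cast_nonneg _)

theorem sum_subtreeShare_le (hq : ∀ v, 0 ≤ q v) : ∑ a, T.subtreeShare q a ≤ ∑ v, q v :=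
  have : Nonempty V := ⟨T.root⟩
  sum_sum_div_card_le _ hq

theorem sum_subtreeShare_mul_le {ℓ : V → ℝ} (hℓ : ∀ v, ℓ (T.par v) ≤ ℓ v)
    (hq : ∀ v, 0 ≤ q v) :
    ∑ a, T.subtreeShare q a * (ℓ a - ℓ T.root) ≤ ∑ v, q v * (ℓ v - ℓ T.root) := by
  have : Nonempty V := ⟨T.root⟩
  calc ∑ a, T.subtreeShare q a * (ℓ a - ℓ T.root)
      = ∑ a, (∑ b ∈ T.subtree a, q b * (ℓ a - ℓ T.root)) / Fintype.card V := by
        simp [subtreeShare, sum_mul, div_mul_eq_mul_div, sum_div]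
    _ ≤ ∑ a, (∑ b ∈ T.subtree a, q b * (ℓ b - ℓ T.root)) / Fintype.card V := by
        gcongr with a _ b hb
        · exact hq b
        · exact le_of_mem_subtree hℓ hb
    _ ≤ ∑ v, q v * (ℓ v - ℓ T.root) := sum_sum_div_card_le _ fun v =>
        mul_nonneg (hq v) (sub_nonneg.2 (le_of_mem_subtree hℓ (mem_subtree_root v)))

theorem exists_waterTransfer {ℓ : V → ℝ} (hℓ : ∀ v, ℓ (T.par v) ≤ ℓ v) (hq : ∀ v, 0 ≤ q v)
    (hq1 : ∑ v, q v = 1) :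
    ∃ r : V → ℝ, (∀ v, 0 ≤ r v) ∧ ∑ v, r v = 1 ∧ ∑ v, (r v - q v) * ℓ v ≤ 0 ∧
      (∀ v, q v / Fintype.card V ≤ r v) ∧ ∀ v ≠ T.root, r v ≤ r (T.par v) := by
  set c := T.subtreeShare q
  set r : V → ℝ := fun v => c v + if v = T.root then 1 - ∑ w, c w else 0
  have hcr (v : V) : c v ≤ r v :=
    le_add_of_nonneg_right (by split_ifs <;> linarith [hq1 ▸ sum_subtreeShare_le (T := T) hq])
  have hrc (v : V) (hv : v ≠ T.root) : r v = c v := by simp [r, hv]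
  refine ⟨r, fun v => (subtreeShare_nonneg hq v).trans (hcr v), by simp [r, sum_add_distrib],
    ?_, fun v => (div_card_le_subtreeShare hq v).trans (hcr v), fun v hv => ?_⟩
  · have : ∑ v, (r v - q v) * ℓ v =
        ∑ v, c v * (ℓ v - ℓ T.root) - ∑ v, q v * (ℓ v - ℓ T.root) := by
      simp only [r, sub_mul, add_mul, mul_sub, sum_sub_distrib, sum_add_distrib, ite_mul,
        zero_mul, sum_ite_eq', mem_univ, if_true, ← sum_mul, hq1]
      ring
    linarith [sum_subtreeShare_mul_le hℓ hq]
  · rw [hrc v hv]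
    exact (subtreeShare_le_subtreeShare_par hq v).trans (hcr _)

end InTree

section Game

variable {k d : ℕ} {L : Fin k → Fin d → ℝ}

theorem simplexD_eq_stdSimplex (d : ℕ) : simplexD d = stdSimplex ℝ (Fin d) := by
  ext ν
  refine ⟨fun h => ⟨fun x => (h.1 x).1, h.2⟩, fun h => ⟨mem_Icc_of_mem_stdSimplex h, h.2⟩⟩

theorem convex_simplexD (d : ℕ) : Convex ℝ (simplexD d) :=
  simplexD_eq_stdSimplex d ▸ convex_stdSimplex ℝ (Fin d)

theorem mem_cell_iff {a : Fin k} {ν : Fin d → ℝ} :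
    ν ∈ cell L a ↔ ν ∈ simplexD d ∧ ∀ b, L a ⬝ᵥ ν ≤ L b ⬝ᵥ ν := Iff.rfl

theorem convex_cell (L : Fin k → Fin d → ℝ) (a : Fin k) : Convex ℝ (cell L a) := by
  intro x hx y hy s t hs ht hst
  refine ⟨convex_simplexD d hx.1 hy.1 hs ht hst, fun b => ?_⟩
  show L a ⬝ᵥ (s • x + t • y) ≤ L b ⬝ᵥ (s • x + t • y)
  simp only [dotProduct_add, dotProduct_smul, smul_eq_mul]
  exact add_le_add (mul_le_mul_of_nonneg_left (hx.2 b) hs) (mul_le_mul_of_nonneg_left (hy.2 b) ht)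

theorem sdim_eq_finrank_vectorSpan (C : Set (Fin d → ℝ)) :
    sdim C = finrank ℝ (vectorSpan ℝ C) := by
  rw [sdim, direction_affineSpan]

theorem sdim_empty : sdim (∅ : Set (Fin d → ℝ)) = 0 := by
  simp [sdim_eq_finrank_vectorSpan]

theorem sdim_insert_le (μ : Fin d → ℝ) (C : Set (Fin d → ℝ)) :
    sdim (insert μ C) ≤ sdim C + 1 := by
  simpa only [sdim_eq_finrank_vectorSpan] using finrank_vectorSpan_insert_le_set ℝ C μ

theorem sdim_le_of_subset_affineSpan {C X : Set (Fin d → ℝ)} (h : C ⊆ affineSpan ℝ X) :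
    sdim C ≤ sdim X :=
  Submodule.finrank_mono (AffineSubspace.direction_le (affineSpan_le.2 h))

-- The common face lies in a level set of the independent functionals `∑ ν`, `(L a - L b) ⬝ᵥ ν`.
theorem sdim_inter_cell_le {a b : Fin k} (hab : L a ≠ L b) :
    sdim (cell L a ∩ cell L b) ≤ d - 2 := by
  rcases (cell L a ∩ cell L b).eq_empty_or_nonempty with h | ⟨z, hza, hzb⟩
  · simp [h, sdim_empty]
  have hface : ∀ ν ∈ cell L a ∩ cell L b, (L a - L b) ⬝ᵥ ν = 0 ∧ 1 ⬝ᵥ ν = 1 := by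
    rintro ν ⟨hνa, hνb⟩
    rw [sub_dotProduct, sub_eq_zero]
    exact ⟨le_antisymm (hνa.2 b) (hνb.2 a), by simpa [dotProduct] using hνa.1.2⟩
  let M : Matrix (Fin 2) (Fin d) ℝ := ![L a - L b, 1]
  have hM : ∀ ν ∈ cell L a ∩ cell L b, M.mulVecLin ν = ![0, 1] := fun ν hν => by
    rw [mulVecLin_apply]
    ext i
    fin_cases i
    exacts [(hface ν hν).1, (hface ν hν).2]
  have hind : LinearIndependent ℝ M := by
    refine LinearIndependent.pair_iff.2 fun s t hst => ?_
    have hz := congrArg (· ⬝ᵥ z) hst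
    simp only [add_dotProduct, smul_dotProduct, zero_dotProduct, smul_eq_mul,
      hface z ⟨hza, hzb⟩, mul_zero, mul_one, zero_add] at hz
    subst hz
    simpa [sub_eq_zero, hab] using hst
  calc sdim (cell L a ∩ cell L b)
      ≤ finrank ℝ (LinearMap.ker M.mulVecLin) := by
        rw [sdim_eq_finrank_vectorSpan]
        exact Submodule.finrank_mono (vectorSpan_le_ker_of_forall_eq _ hM)
    _ = d - 2 := by simpa using finrank_ker_mulVecLin_of_linearIndependent hind

theorem exists_mem_cell_forall_notMem_affineSpan (hd : 3 ≤ d) (hL : Function.Injective L)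
    {a : Fin k} (ha : sdim (cell L a) = d - 1) (μ : Fin d → ℝ) :
    ∃ p ∈ cell L a, ∀ c ≠ a, sdim (cell L a ∩ cell L c) ≠ d - 2 →
      p ∉ affineSpan ℝ (insert μ (cell L a ∩ cell L c)) := by
  classical
  have hne : (cell L a).Nonempty :=
    Set.nonempty_iff_ne_empty.2 fun h => by rw [h, sdim_empty] at ha; omega
  obtain ⟨p, hp, hpS⟩ := (convex_cell L a).exists_mem_forall_notMem hne
    (fun c => affineSpan ℝ (insert μ (cell L a ∩ cell L c)))
    {c | c ≠ a ∧ sdim (cell L a ∩ cell L c) ≠ d - 2} fun c hc hsub => by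
      simp only [mem_filter, mem_univ, true_and] at hc
      have h₁ := sdim_le_of_subset_affineSpan hsub
      have h₂ := sdim_insert_le μ (cell L a ∩ cell L c)
      have h₃ := sdim_inter_cell_le (hL.ne hc.1.symm)
      omega
  exact ⟨p, hp, fun c hca hc => hpS c (by simp [hca, hc])⟩

theorem exists_lineMap_mem_cell_inter {a c : Fin k} {p μ : Fin d → ℝ} (hp : p ∈ cell L a)
    (hμ : μ ∈ simplexD d) (hc : L c ⬝ᵥ μ < L a ⬝ᵥ μ) :
    ∃ t ∈ Set.Ico (0 : ℝ) 1, ∃ b, lineMap p μ t ∈ cell L a ∩ cell L b ∧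
      L b ⬝ᵥ μ < L a ⬝ᵥ μ := by
  obtain ⟨t, ht, b, hb, hbt, hall⟩ := exists_first_zero_of_affine (fun c => L c ⬝ᵥ p - L a ⬝ᵥ p)
    (fun c => L c ⬝ᵥ μ - L a ⬝ᵥ μ) (fun c => sub_nonneg.2 (hp.2 c)) ⟨c, sub_neg.2 hc⟩
  have hz : lineMap p μ t ∈ simplexD d :=
    (convex_simplexD d).lineMap_mem hp.1 hμ ⟨ht.1, ht.2.le⟩
  have hgap (c : Fin k) : L c ⬝ᵥ lineMap p μ t - L a ⬝ᵥ lineMap p μ t =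
      (1 - t) * (L c ⬝ᵥ p - L a ⬝ᵥ p) + t * (L c ⬝ᵥ μ - L a ⬝ᵥ μ) := by
    simp only [dotProduct_lineMap]
    ring
  refine ⟨t, ht, b, ⟨mem_cell_iff.2 ⟨hz, fun c => ?_⟩, mem_cell_iff.2 ⟨hz, fun c => ?_⟩⟩,
    sub_neg.1 hb⟩
  · linarith [hgap c, hall c]
  · linarith [hgap c, hall c, hgap b]

theorem exists_neighbours_lt (hL : Function.Injective L)
    (hpareto : ∀ a, sdim (cell L a) = d - 1) {μ : Fin d → ℝ} (hμ : μ ∈ simplexD d)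
    {a c : Fin k} (hc : L c ⬝ᵥ μ < L a ⬝ᵥ μ) :
    ∃ b, Neighbours L a b ∧ L b ⬝ᵥ μ < L a ⬝ᵥ μ := by
  rcases le_or_gt d 2 with hd | hd
  -- here `d - 2 = 0`, so any two distinct actions are neighbours
  · have hac : a ≠ c := ne_of_apply_ne (L · ⬝ᵥ μ) hc.ne'
    have := sdim_inter_cell_le (hL.ne hac)
    exact ⟨c, ⟨hac, hpareto a, hpareto c, by omega⟩, hc⟩
  obtain ⟨p, hp, hpS⟩ := exists_mem_cell_forall_notMem_affineSpan hd hL (hpareto a) μ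
  obtain ⟨t, ⟨-, ht⟩, b, hz, hb⟩ := exists_lineMap_mem_cell_inter hp hμ hc
  have hba : b ≠ a := ne_of_apply_ne (L · ⬝ᵥ μ) hb.ne
  refine ⟨b, ⟨hba.symm, hpareto a, hpareto b, ?_⟩, hb⟩
  by_contra hsd
  apply hpS b hba hsd
  -- `p` lies on the line through the crossing point and `μ`
  have hμS : lineMap p μ (1 : ℝ) ∈ affineSpan ℝ (insert μ (cell L a ∩ cell L b)) := by
    simpa using subset_affineSpan ℝ _ (Set.mem_insert μ _)
  simpa using AffineSubspace.lineMap_mem_of_lineMap_mem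
    (subset_affineSpan ℝ _ (Set.mem_insert_of_mem μ hz)) hμS ht.ne 0

theorem exists_mem_simplexD_injective_of_lt (hd : 0 < d) (hL : Function.Injective L)
    {ν : Fin d → ℝ} (hν : ν ∈ simplexD d) :
    ∃ μ ∈ simplexD d, Function.Injective (fun a => L a ⬝ᵥ μ) ∧
      ∀ a b, L a ⬝ᵥ ν < L b ⬝ᵥ ν → L a ⬝ᵥ μ < L b ⬝ᵥ μ := by
  have : Nonempty (Fin d) := ⟨⟨0, hd⟩⟩
  obtain ⟨ν', hν', hinj⟩ := exists_mem_stdSimplex_injective_dotProduct hL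
  obtain ⟨ε, hε, hεinj, hεlt⟩ := exists_perturbation_injective_of_lt _ _ hinj
  refine ⟨lineMap ν ν' ε, (convex_simplexD d).lineMap_mem hν
    (simplexD_eq_stdSimplex d ▸ hν') ⟨hε.1.le, hε.2.le⟩, ?_, ?_⟩
  · simpa only [dotProduct_lineMap] using hεinj
  · simpa only [dotProduct_lineMap] using hεlt

end Game

theorem stmt9_general (k d : ℕ) (hk : 0 < k) (hd : 0 < d)
    (L : Fin k → Fin d → ℝ)
    (hdup : ∀ a b : Fin k, a ≠ b → L a ≠ L b)
    (hpareto : ∀ a : Fin k, sdim (cell L a) = d - 1) :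
    ∀ ν ∈ simplexD d, ∀ q : Fin k → ℝ, (∀ a, 0 ≤ q a) → (∑ a, q a = 1) →
      ∃ r : Fin k → ℝ, (∀ a, 0 ≤ r a) ∧ (∑ a, r a = 1) ∧
        (∑ a, (r a - q a) * ∑ x, L a x * ν x) ≤ 0 ∧
        (∀ a, q a / k ≤ r a) ∧
        ∃ T : InTree (Fin k),
          (∀ e ∈ T.edges, Neighbours L e.1 e.2) ∧
          (∀ e ∈ T.edges, r e.1 ≤ r e.2) := by
  intro ν hν q hq hq1
  have hL : Function.Injective L := fun a b h => by_contra fun hab => hdup a b hab h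
  obtain ⟨μ, hμ, hinj, hlt⟩ := exists_mem_simplexD_injective_of_lt hd hL hν
  have : Nonempty (Fin k) := ⟨⟨0, hk⟩⟩
  obtain ⟨a₀, ha₀⟩ := Finite.exists_min fun a => L a ⬝ᵥ μ
  obtain ⟨T, -, hT⟩ := InTree.exists_of_forall_exists_lt (Neighbours L) (L · ⬝ᵥ μ) a₀
    fun a ha => exists_neighbours_lt hL hpareto hμ ((ha₀ a).lt_of_ne (hinj.ne ha.symm))
  have hℓ (v : Fin k) : L (T.par v) ⬝ᵥ ν ≤ L v ⬝ᵥ ν := by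
    by_cases hv : v = T.root
    · rw [hv, T.par_root]
    · exact not_lt.1 fun h => (hT v hv).2.not_gt (hlt _ _ h)
  obtain ⟨r, hr₀, hr₁, hloss, hqr, hr⟩ := T.exists_waterTransfer (ℓ := (L · ⬝ᵥ ν)) hℓ hq hq1
  exact ⟨r, hr₀, hr₁, hloss, by simpa using hqr, T,
    T.forall_mem_edges.2 fun v hv => (hT v hv).1, T.forall_mem_edges (P := (r · ≤ r ·)) |>.2 hr⟩

/-- Water transfer operator (Lemma 4): for a non-degenerate locally observable
game, every `ν ∈ D` and probability vector `q` admit a probability vector `r`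
with (a) no larger expected loss, (b) `r_a ≥ q_a/k`, and (c) increasing along
some in-tree contained in the neighbourhood graph. -/
theorem stmt9 (k d : ℕ) (hk : 0 < k) (hd : 0 < d) (S : Type*) [Fintype S]
    (L : Fin k → Fin d → ℝ) (hL : ∀ a x, L a x ∈ Set.Icc (0 : ℝ) 1)
    (Φ : Fin k → Fin d → S)
    (hdup : ∀ a b : Fin k, a ≠ b → L a ≠ L b)
    (hpareto : ∀ a : Fin k, sdim (cell L a) = d - 1)
    (hlocal : ∀ a b : Fin k, Neighbours L a b →
      ∃ wa wb : S → ℝ, ∀ x, L a x - L b x = wa (Φ a x) + wb (Φ b x)) :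
    ∀ ν ∈ simplexD d, ∀ q : Fin k → ℝ, (∀ a, 0 ≤ q a) → (∑ a, q a = 1) →
      ∃ r : Fin k → ℝ, (∀ a, 0 ≤ r a) ∧ (∑ a, r a = 1) ∧
        (∑ a, (r a - q a) * ∑ x, L a x * ν x) ≤ 0 ∧
        (∀ a, q a / k ≤ r a) ∧
        ∃ T : InTree (Fin k),
          (∀ e ∈ T.edges, Neighbours L e.1 e.2) ∧
          (∀ e ∈ T.edges, r e.1 ≤ r e.2) :=
  stmt9_general k d hk hd L hdup hpareto
end

section
/- Let L ∈ [0,1]^{k×d}. Assume no two distinct rows of L are equal (no duplicate actions) and that every action a ∈ [k] is Pareto optimal, i.e. dim(C_a) = d−1. Then for every ν ∈ D there exists an in-tree T on [k] with T ⊆ E such that (Lν)_a ≥ (Lν)_b for every edge (a,b) ∈ T; that is, the expected loss vector Lν is decreasing along T toward the root. -/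
namespace Stmt10Aux
open Module Finset

variable {d : ℕ}

lemma sum_mul_comb (c x y : Fin d → ℝ) (s t : ℝ) :
    ∑ i, c i * (s * x i + t * y i) = s * ∑ i, c i * x i + t * ∑ i, c i * y i := by
  rw [Finset.mul_sum, Finset.mul_sum, ← Finset.sum_add_distrib]
  exact Finset.sum_congr rfl fun i _ => by ring

lemma sdim_empty : sdim (∅ : Set (Fin d → ℝ)) = 0 := by
  unfold sdim
  rw [AffineSubspace.span_empty, AffineSubspace.direction_bot, finrank_bot]

lemma sdim_nonempty {C : Set (Fin d → ℝ)} (h : sdim C ≠ 0) : C.Nonempty := by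
  rcases Set.eq_empty_or_nonempty C with rfl | hne
  · exact absurd sdim_empty h
  · exact hne

/-- two distinct points on a line in an affine subspace give the whole line -/
lemma line_mem (W : AffineSubspace ℝ (Fin d → ℝ)) (x v : Fin d → ℝ) {a b : ℝ} (hab : a ≠ b)
    (ha : x + a • v ∈ W) (hb : x + b • v ∈ W) (c : ℝ) : x + c • v ∈ W := by
  have hba : b - a ≠ 0 := sub_ne_zero.2 (Ne.symm hab)
  have key : x + c • v = ((c - a) / (b - a)) • ((x + b • v) -ᵥ (x + a • v)) +ᵥ (x + a • v) := by
    simp only [vsub_eq_sub, vadd_eq_add]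
    have h1 : (x + b • v) - (x + a • v) = (b - a) • v := by
      rw [sub_smul]; abel
    rw [h1, smul_smul, div_mul_cancel₀ _ hba, sub_smul]
    abel
  rw [key]
  exact W.smul_vsub_vadd_mem _ hb ha ha

end Stmt10Aux
namespace Stmt10Aux
open Module Finset

variable {d : ℕ}

/-- A nonempty convex set covered by finitely many affine subspaces lies in one of them. -/
lemma convex_cover {ι : Type*} [DecidableEq ι] (s : Finset ι)
    (W : ι → AffineSubspace ℝ (Fin d → ℝ)) {C : Set (Fin d → ℝ)}
    (hC : Convex ℝ C) (hne : C.Nonempty)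
    (hcov : ∀ x ∈ C, ∃ i ∈ s, x ∈ W i) :
    ∃ i ∈ s, ∀ x ∈ C, x ∈ W i := by
  induction s using Finset.strongInduction with
  | _ s ih =>
    by_cases hex : ∃ i ∈ s, ∀ x ∈ C, ∃ j ∈ s.erase i, x ∈ W j
    · obtain ⟨i, hi, h⟩ := hex
      obtain ⟨j, hj, hCj⟩ := ih (s.erase i) (Finset.erase_ssubset hi) h
      exact ⟨j, Finset.mem_of_mem_erase hj, hCj⟩
    · push_neg at hex
      obtain ⟨x0, hx0⟩ := hne
      obtain ⟨i₁, hi₁, _⟩ := hcov x0 hx0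
      obtain ⟨x₁, hx₁C, hx₁⟩ := hex i₁ hi₁
      have hx₁W : x₁ ∈ W i₁ := by
        obtain ⟨j, hj, hjW⟩ := hcov x₁ hx₁C
        rcases eq_or_ne j i₁ with rfl | hne'
        · exact hjW
        · exact absurd hjW (hx₁ j (Finset.mem_erase.2 ⟨hne', hj⟩))
      by_cases h2 : ∃ i ∈ s, i ≠ i₁
      · exfalso
        obtain ⟨i₂, hi₂, hne12⟩ := h2
        obtain ⟨x₂, hx₂C, hx₂⟩ := hex i₂ hi₂
        have hx₂notW1 : x₂ ∉ W i₁ := hx₂ i₁ (Finset.mem_erase.2 ⟨hne12.symm, hi₁⟩)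
        set v : Fin d → ℝ := x₂ - x₁ with hv
        have hcomb : ∀ t : ℝ, x₁ + t • v = (1 - t) • x₁ + t • x₂ := by
          intro t; rw [hv]; module
        set tf : ℕ → ℝ := fun n => 1 / (n + 2) with htf
        have htmem : ∀ n : ℕ, x₁ + tf n • v ∈ C := by
          intro n
          rw [hcomb]
          have h1 : (0:ℝ) < (n:ℝ) + 2 := by positivity
          have h2 : (0:ℝ) ≤ tf n := by positivity
          have h3 : tf n ≤ 1 := by
            rw [htf]; rw [div_le_one h1]; linarith
          exact hC hx₁C hx₂C (by linarith) h2 (by ring)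
        choose jf hjfs hjfW using fun n => hcov _ (htmem n)
        have : ∃ n m : ℕ, n ≠ m ∧ (⟨jf n, hjfs n⟩ : {i // i ∈ s}) = ⟨jf m, hjfs m⟩ :=
          Finite.exists_ne_map_eq_of_infinite _
        obtain ⟨n, m, hnm, hj⟩ := this
        have hjeq : jf n = jf m := by simpa using hj
        have htne : tf n ≠ tf m := by
          rw [htf]
          intro h
          have h1 : (0:ℝ) < (n:ℝ) + 2 := by positivity
          have h2 : (0:ℝ) < (m:ℝ) + 2 := by positivity
          rw [div_eq_div_iff h1.ne' h2.ne'] at h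
          have : (n:ℝ) = m := by linarith
          exact hnm (by exact_mod_cast this)
        have hWx₁ : x₁ ∈ W (jf n) := by
          have := line_mem (W (jf n)) x₁ v htne (hjfW n) (hjeq ▸ hjfW m) 0
          simpa using this
        have hWx₂ : x₂ ∈ W (jf n) := by
          have := line_mem (W (jf n)) x₁ v htne (hjfW n) (hjeq ▸ hjfW m) 1
          rw [one_smul, hv] at this
          simpa using this
        rcases eq_or_ne (jf n) i₂ with hji | hji
        · exact hx₁ (jf n) (Finset.mem_erase.2 ⟨by rw [hji]; exact hne12, hjfs n⟩) hWx₁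
        · exact hx₂ (jf n) (Finset.mem_erase.2 ⟨hji, hjfs n⟩) hWx₂
      · push_neg at h2
        refine ⟨i₁, hi₁, fun x hx => ?_⟩
        obtain ⟨j, hj, hjW⟩ := hcov x hx
        rwa [h2 j hj] at hjW

end Stmt10Aux
namespace Stmt10Aux
open Module Finset

variable {d k : ℕ}

/-- the linear functional `y ↦ ∑ i, c i * y i` -/
def dotL (c : Fin d → ℝ) : (Fin d → ℝ) →ₗ[ℝ] ℝ where
  toFun y := ∑ i, c i * y i
  map_add' x y := by
    simp only [Pi.add_apply, mul_add]
    exact Finset.sum_add_distrib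
  map_smul' r y := by
    simp only [Pi.smul_apply, smul_eq_mul, RingHom.id_apply, Finset.mul_sum]
    exact Finset.sum_congr rfl fun i _ => by ring

lemma dotL_apply (c y : Fin d → ℝ) : dotL c y = ∑ i, c i * y i := rfl

lemma mem_cell_iff {L : Fin k → Fin d → ℝ} {a : Fin k} {x : Fin d → ℝ} :
    x ∈ cell L a ↔ x ∈ simplexD d ∧ ∀ b, ∑ i, L a i * x i ≤ ∑ i, L b i * x i := Iff.rfl

lemma eq_on_inter {L : Fin k → Fin d → ℝ} {a b : Fin k} {x : Fin d → ℝ}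
    (hx : x ∈ cell L a ∩ cell L b) : ∑ i, L a i * x i = ∑ i, L b i * x i :=
  le_antisymm (hx.1.2 b) (hx.2.2 a)

lemma sdim_le_of_vectorSpan_le {C : Set (Fin d → ℝ)} {V : Submodule ℝ (Fin d → ℝ)}
    (h : ∀ x ∈ C, ∀ y ∈ C, x - y ∈ V) : sdim C ≤ finrank ℝ V := by
  unfold sdim
  rw [direction_affineSpan]
  apply Submodule.finrank_mono
  rw [vectorSpan_def, Submodule.span_le]
  rintro z ⟨x, hx, y, hy, rfl⟩
  exact h x hx y hy

/-- Upper bound: the intersection of two distinct cells has dimension at most `d - 2`. -/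
lemma sdim_inter_le (hd : 0 < d) (L : Fin k → Fin d → ℝ) {a b : Fin k}
    (hLab : L a ≠ L b) : sdim (cell L a ∩ cell L b) ≤ d - 2 := by
  set c : Fin d → ℝ := fun i => L a i - L b i with hc
  have hdot : ∀ x ∈ cell L a ∩ cell L b, dotL c x = 0 := by
    intro x hx
    rw [dotL_apply]
    have := eq_on_inter hx
    simp only [hc, sub_mul]
    rw [Finset.sum_sub_distrib]
    linarith
  by_cases hconst : ∀ i j, c i = c j
  · -- constant difference: the intersection is empty
    have hc0 : c ⟨0, hd⟩ ≠ 0 := by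
      intro h0
      apply hLab
      funext i
      have := hconst i ⟨0, hd⟩
      rw [h0] at this
      have : L a i - L b i = 0 := this
      linarith
    have hempty : cell L a ∩ cell L b = ∅ := by
      rw [Set.eq_empty_iff_forall_notMem]
      intro x hx
      have h1 := hdot x hx
      rw [dotL_apply] at h1
      have h2 : ∀ i, c i * x i = c ⟨0, hd⟩ * x i := fun i => by rw [hconst i ⟨0, hd⟩]
      rw [Finset.sum_congr rfl (fun i _ => h2 i), ← Finset.mul_sum, hx.1.1.2, mul_one] at h1
      exact hc0 h1
    rw [hempty, sdim_empty]
    exact Nat.zero_le _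
  · -- nonconstant difference
    push_neg at hconst
    obtain ⟨i0, j0, hij⟩ := hconst
    set one : Fin d → ℝ := fun _ => 1 with hone
    set V : Submodule ℝ (Fin d → ℝ) := LinearMap.ker (dotL one) ⊓ LinearMap.ker (dotL c) with hV
    have hsub : sdim (cell L a ∩ cell L b) ≤ finrank ℝ V := by
      apply sdim_le_of_vectorSpan_le
      intro x hx y hy
      constructor
      · rw [SetLike.mem_coe, LinearMap.mem_ker, map_sub, dotL_apply, dotL_apply]
        simp only [hone, one_mul]
        rw [hx.1.1.2, hy.1.1.2]
        ring
      · rw [SetLike.mem_coe, LinearMap.mem_ker, map_sub, hdot x hx, hdot y hy]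
        ring
    have hlt : V < LinearMap.ker (dotL (one : Fin d → ℝ)) := by
      rw [lt_iff_le_and_ne]
      refine ⟨inf_le_left, ?_⟩
      intro heq
      have hmem : (Pi.single i0 1 - Pi.single j0 1 : Fin d → ℝ) ∈ LinearMap.ker (dotL one) := by
        rw [LinearMap.mem_ker, map_sub, dotL_apply, dotL_apply]
        simp only [hone, one_mul]
        rw [Finset.sum_pi_single', Finset.sum_pi_single']
        simp
      rw [← heq] at hmem
      have : dotL c (Pi.single i0 1 - Pi.single j0 1) = 0 := hmem.2
      rw [map_sub, dotL_apply, dotL_apply] at this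
      have hsum : ∀ m : Fin d, ∑ i, c i * (Pi.single m 1 : Fin d → ℝ) i = c m := by
        intro m
        rw [Finset.sum_eq_single m]
        · simp
        · intro i _ hi; simp [Pi.single_apply, hi]
        · simp
      rw [hsum, hsum] at this
      exact hij (by linarith)
    have hker : finrank ℝ (LinearMap.ker (dotL (one : Fin d → ℝ))) = d - 1 := by
      have hsurj : Function.Surjective (dotL (one : Fin d → ℝ)) := by
        intro r
        refine ⟨fun _ => r / d, ?_⟩
        rw [dotL_apply]
        simp only [hone, one_mul]
        rw [Finset.sum_const, Finset.card_univ, Fintype.card_fin, nsmul_eq_mul]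
        field_simp
      have := LinearMap.finrank_range_add_finrank_ker (dotL (one : Fin d → ℝ))
      rw [LinearMap.range_eq_top.2 hsurj, finrank_top, Module.finrank_self,
        Module.finrank_pi] at this
      simp only [Fintype.card_fin] at this
      omega
    have := Submodule.finrank_lt_finrank_of_lt hlt
    rw [hker] at this
    omega

end Stmt10Aux
namespace Stmt10Aux
open Module Finset

variable {d k : ℕ}

lemma comb_mem_simplex {x ν : Fin d → ℝ} (hx : x ∈ simplexD d) (hν : ν ∈ simplexD d)
    {t : ℝ} (h0 : 0 ≤ t) (h1 : t ≤ 1) :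
    (fun i => (1 - t) * x i + t * ν i) ∈ simplexD d := by
  constructor
  · intro i
    obtain ⟨hx0, hx1⟩ := hx.1 i
    obtain ⟨hν0, hν1⟩ := hν.1 i
    simp only
    constructor
    · nlinarith
    · nlinarith
  · rw [show (fun i => (1 - t) * x i + t * ν i) = fun i => (1-t) * x i + t * ν i from rfl]
    calc ∑ i, ((1 - t) * x i + t * ν i) = (1-t) * ∑ i, x i + t * ∑ i, ν i := by
          rw [Finset.mul_sum, Finset.mul_sum, ← Finset.sum_add_distrib]
      _ = 1 := by rw [hx.2, hν.2]; ring

lemma finrank_insert_le (p : Fin d → ℝ) (S : Set (Fin d → ℝ)) :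
    finrank ℝ (affineSpan ℝ (insert p S)).direction ≤ sdim S + 1 := by
  rcases Set.eq_empty_or_nonempty S with rfl | ⟨q, hq⟩
  · rw [show insert p (∅ : Set (Fin d → ℝ)) = {p} from by simp]
    rw [direction_affineSpan]
    have : vectorSpan ℝ ({p} : Set (Fin d → ℝ)) = ⊥ := vectorSpan_singleton ℝ p
    rw [this, finrank_bot]
    omega
  · rw [← affineSpan_insert_affineSpan,
      AffineSubspace.direction_affineSpan_insert (mem_affineSpan ℝ hq)]
    calc finrank ℝ ↥(Submodule.span ℝ {p -ᵥ q} ⊔ (affineSpan ℝ S).direction)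
        ≤ finrank ℝ (Submodule.span ℝ {p -ᵥ q}) + finrank ℝ (affineSpan ℝ S).direction :=
          Submodule.finrank_add_le_finrank_add_finrank _ _
      _ ≤ sdim S + 1 := by
          have h1 : finrank ℝ (Submodule.span ℝ ({p -ᵥ q} : Set (Fin d → ℝ))) ≤ 1 := by
            rcases eq_or_ne (p -ᵥ q) 0 with h | h
            · rw [h, Submodule.span_zero_singleton, finrank_bot]; omega
            · rw [finrank_span_singleton h]
          unfold sdim
          omega

end Stmt10Aux
namespace Stmt10Aux
open Module Finset

variable {d k : ℕ}

lemma cell_convex (L : Fin k → Fin d → ℝ) (a : Fin k) : Convex ℝ (cell L a) := by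
  intro x hx y hy s t hs ht hst
  have key : s • x + t • y = fun i => (1 - t) * x i + t * y i := by
    funext i
    simp only [Pi.add_apply, Pi.smul_apply, smul_eq_mul]
    have : s = 1 - t := by linarith
    rw [this]
  rw [key, mem_cell_iff]
  refine ⟨comb_mem_simplex hx.1 hy.1 ht (by linarith), fun b => ?_⟩
  rw [sum_mul_comb (L a), sum_mul_comb (L b)]
  have h1 := hx.2 b
  have h2 := hy.2 b
  have h1t : (0:ℝ) ≤ 1 - t := by linarith
  nlinarith

/-- Core lemma: if `a` is suboptimal at `ν'`, there is a `b` with strictly smaller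
loss at `ν'` whose cell meets `cell a` in dimension `d - 2`. -/
lemma exists_neighbour (hd2 : 2 ≤ d) (L : Fin k → Fin d → ℝ)
    (hdup : ∀ a b : Fin k, a ≠ b → L a ≠ L b)
    (hpareto : ∀ a : Fin k, sdim (cell L a) = d - 1)
    {ν' : Fin d → ℝ} (hν' : ν' ∈ simplexD d) (a : Fin k)
    (hB : ∃ b, ∑ x, L b x * ν' x < ∑ x, L a x * ν' x) :
    ∃ b, (∑ x, L b x * ν' x < ∑ x, L a x * ν' x) ∧
      sdim (cell L a ∩ cell L b) = d - 2 := by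
  classical
  have hCane : (cell L a).Nonempty := sdim_nonempty (by rw [hpareto a]; omega)
  set F : Fin k → (Fin d → ℝ) → ℝ := fun b y => ∑ x, L b x * y x with hF
  set Bset : Finset (Fin k) := univ.filter (fun b => F b ν' < F a ν') with hBset
  have hBne : Bset.Nonempty := by
    obtain ⟨b, hb⟩ := hB
    exact ⟨b, by simp only [hBset, mem_filter, mem_univ, true_and]; exact hb⟩
  set W : Fin k → AffineSubspace ℝ (Fin d → ℝ) :=
    fun b => affineSpan ℝ (insert ν' (cell L a ∩ cell L b)) with hW
  have hcov : ∀ x ∈ cell L a, ∃ b ∈ Bset, x ∈ W b := by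
    intro x hx
    set g0 : Fin k → ℝ := fun b => F b x - F a x with hg0
    set g1 : Fin k → ℝ := fun b => F b ν' - F a ν' with hg1
    have hg0nn : ∀ b, 0 ≤ g0 b := fun b => sub_nonneg.2 (hx.2 b)
    have hg1neg : ∀ b ∈ Bset, g1 b < 0 := by
      intro b hb
      simp only [hBset, mem_filter, mem_univ, true_and] at hb
      simp only [hg1]
      linarith
    have hdenpos : ∀ b ∈ Bset, 0 < g0 b - g1 b := by
      intro b hb
      have := hg1neg b hb
      have := hg0nn b
      linarith
    set r : Fin k → ℝ := fun b => g0 b / (g0 b - g1 b) with hr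
    obtain ⟨bs, hbs, hmin⟩ := Finset.exists_min_image Bset r hBne
    set t := r bs with ht
    have ht0 : 0 ≤ t := div_nonneg (hg0nn bs) (le_of_lt (hdenpos bs hbs))
    have ht1 : t < 1 := by
      rw [ht, hr]
      rw [div_lt_one (hdenpos bs hbs)]
      have := hg1neg bs hbs
      linarith
    set p : Fin d → ℝ := fun i => (1 - t) * x i + t * ν' i with hp
    have hpF : ∀ b, F b p = (1 - t) * F b x + t * F b ν' :=
      fun b => sum_mul_comb (L b) x ν' (1 - t) t
    have hps : p ∈ simplexD d := comb_mem_simplex hx.1 hν' ht0 (le_of_lt ht1)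
    have hcell : ∀ b, F a p ≤ F b p := by
      intro b
      rw [hpF, hpF]
      by_cases hbB : b ∈ Bset
      · have h1 : t ≤ r b := hmin b hbB
        have h2 : 0 < g0 b - g1 b := hdenpos b hbB
        have h3 : t * (g0 b - g1 b) ≤ g0 b := by
          rw [← le_div_iff₀ h2] at *
          exact h1
        have e0 : F b x - F a x = g0 b := rfl
        have e1 : F b ν' - F a ν' = g1 b := rfl
        nlinarith [h3]
      · have h1 : 0 ≤ g1 b := by
          simp only [hBset, mem_filter, mem_univ, true_and, not_lt] at hbB
          simp only [hg1]
          linarith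
        have h2 := hg0nn b
        have e0 : F b x - F a x = g0 b := rfl
        have e1 : F b ν' - F a ν' = g1 b := rfl
        nlinarith [mul_nonneg (by linarith : (0:ℝ) ≤ 1 - t) h2, mul_nonneg ht0 h1]
    have hpa : p ∈ cell L a := ⟨hps, hcell⟩
    have hFbsp : F bs p = F a p := by
      rw [hpF, hpF]
      have h2 : g0 bs - g1 bs ≠ 0 := ne_of_gt (hdenpos bs hbs)
      have h3 : t * (g0 bs - g1 bs) = g0 bs := by
        rw [ht, hr]
        field_simp
      have e0 : F bs x - F a x = g0 bs := rfl
      have e1 : F bs ν' - F a ν' = g1 bs := rfl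
      nlinarith [h3]
    have hpb : p ∈ cell L bs := ⟨hps, fun c => by show F bs p ≤ F c p; rw [hFbsp]; exact hcell c⟩
    refine ⟨bs, hbs, ?_⟩
    have hν'W : ν' ∈ W bs := mem_affineSpan ℝ (Set.mem_insert _ _)
    have hpW : p ∈ W bs := mem_affineSpan ℝ (Set.mem_insert_of_mem _ ⟨hpa, hpb⟩)
    have h1t : (1:ℝ) - t ≠ 0 := by linarith
    have hx_eq : x = ν' + ((1:ℝ)/(1-t)) • (p - ν') := by
      funext i
      simp only [Pi.add_apply, Pi.smul_apply, Pi.sub_apply, smul_eq_mul, hp]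
      field_simp
      ring
    rw [hx_eq]
    have h0 : ν' + (0:ℝ) • (p - ν') ∈ W bs := by simpa using hν'W
    have h1 : ν' + (1:ℝ) • (p - ν') ∈ W bs := by
      have : ν' + (1:ℝ) • (p - ν') = p := by
        rw [one_smul]; abel
      rw [this]; exact hpW
    exact line_mem _ _ _ (by norm_num) h0 h1 _
  obtain ⟨bs, hbsB, hsub⟩ := convex_cover Bset W (cell_convex L a) hCane hcov
  have hale : d - 1 ≤ finrank ℝ (W bs).direction := by
    rw [← hpareto a]
    unfold sdim
    apply Submodule.finrank_mono
    apply AffineSubspace.direction_le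
    exact affineSpan_le.2 (fun x hx => hsub x hx)
  have hub : finrank ℝ (W bs).direction ≤ sdim (cell L a ∩ cell L bs) + 1 :=
    finrank_insert_le ν' _
  have hlt : F bs ν' < F a ν' := by
    have := hbsB
    simp only [hBset, mem_filter, mem_univ, true_and] at this
    exact this
  have habs : L a ≠ L bs := hdup a bs (fun h => by rw [h] at hlt; exact lt_irrefl _ hlt)
  have hle2 := sdim_inter_le (show 0 < d by omega) L habs
  exact ⟨bs, hlt, by omega⟩

end Stmt10Aux
namespace Stmt10Aux
open Module Finset

variable {d k : ℕ}

lemma simplex_convex : Convex ℝ (simplexD d) := by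
  intro x hx y hy s t hs ht hst
  have key : s • x + t • y = fun i => (1 - t) * x i + t * y i := by
    funext i
    simp only [Pi.add_apply, Pi.smul_apply, smul_eq_mul]
    have : s = 1 - t := by linarith
    rw [this]
  rw [key]
  exact comb_mem_simplex hx hy ht (by linarith)

lemma dotL_single (c : Fin d → ℝ) (m : Fin d) : dotL c (Pi.single m 1) = c m := by
  rw [dotL_apply]
  rw [Finset.sum_eq_single m]
  · simp
  · intro i _ hi; simp [Pi.single_apply, hi]
  · simp

lemma single_mem_simplex (m : Fin d) : (Pi.single m 1 : Fin d → ℝ) ∈ simplexD d := by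
  constructor
  · intro i
    rcases eq_or_ne i m with rfl | hi
    · simp
    · simp [Pi.single_apply, hi]
  · rw [Finset.sum_eq_single m]
    · simp
    · intro i _ hi; simp [Pi.single_apply, hi]
    · simp

lemma exists_generic (hd : 0 < d) (L : Fin k → Fin d → ℝ)
    (hdup : ∀ a b : Fin k, a ≠ b → L a ≠ L b) :
    ∃ μ ∈ simplexD d, ∀ a b : Fin k, a ≠ b →
      (∑ x, L a x * μ x) ≠ (∑ x, L b x * μ x) := by
  classical
  by_contra hcon
  push_neg at hcon
  set W : Fin k × Fin k → AffineSubspace ℝ (Fin d → ℝ) :=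
    fun pq => (LinearMap.ker (dotL (fun i => L pq.1 i - L pq.2 i))).toAffineSubspace with hW
  have hcov : ∀ μ ∈ simplexD d,
      ∃ pq ∈ (univ : Finset (Fin k × Fin k)).filter (fun pq => pq.1 ≠ pq.2), μ ∈ W pq := by
    intro μ hμ
    obtain ⟨a, b, hab, heq⟩ := hcon μ hμ
    refine ⟨(a, b), by simp [hab], ?_⟩
    rw [hW]
    rw [Submodule.mem_toAffineSubspace, LinearMap.mem_ker, dotL_apply]
    simp only [sub_mul]
    rw [Finset.sum_sub_distrib]
    rw [heq]
    ring
  obtain ⟨pq, hpq, hsub⟩ := convex_cover _ W simplex_convex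
    ⟨Pi.single ⟨0, hd⟩ 1, single_mem_simplex _⟩ hcov
  have hne : pq.1 ≠ pq.2 := (Finset.mem_filter.1 hpq).2
  apply hdup pq.1 pq.2 hne
  funext i
  have := hsub (Pi.single i 1) (single_mem_simplex i)
  rw [hW] at this
  rw [Submodule.mem_toAffineSubspace, LinearMap.mem_ker, dotL_single] at this
  linarith [this]

lemma reaches_of_decr (r : Fin k) (par : Fin k → Fin k) (f : Fin k → ℝ)
    (hdec : ∀ a, a ≠ r → f (par a) < f a) : ∀ v, ∃ n, par^[n] v = r := by
  classical
  have key : ∀ n (v : Fin k), (univ.filter fun c => f c < f v).card = n →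
      ∃ m, par^[m] v = r := by
    intro n
    induction n using Nat.strong_induction_on with
    | _ n ih =>
      intro v hv
      by_cases hvr : v = r
      · exact ⟨0, by simp [hvr]⟩
      · have hlt := hdec v hvr
        have hsubset : (univ.filter fun c => f c < f (par v)) ⊆
            (univ.filter fun c => f c < f v) := by
          intro c hc
          simp only [mem_filter, mem_univ, true_and] at hc ⊢
          linarith
        have hsub := (Finset.ssubset_iff_of_subset hsubset).2
          ⟨par v, by simp only [mem_filter, mem_univ, true_and]; exact hlt, by simp⟩
        have hcard : (univ.filter fun c => f c < f (par v)).card < n :=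
          hv ▸ Finset.card_lt_card hsub
        obtain ⟨m, hm⟩ := ih _ hcard (par v) rfl
        exact ⟨m + 1, by rw [Function.iterate_succ_apply]; exact hm⟩
  exact fun v => key _ v rfl

end Stmt10Aux
/-- If a game has no duplicate actions and every action is Pareto optimal,
then for every `ν ∈ D` there is an in-tree `T ⊆ E` on `[k]` along which the
expected loss vector `Lν` is decreasing toward the root. -/
theorem stmt10 (k d : ℕ) (hk : 0 < k) (hd : 0 < d)
    (L : Fin k → Fin d → ℝ) (hL : ∀ a x, L a x ∈ Set.Icc (0 : ℝ) 1)
    (hdup : ∀ a b : Fin k, a ≠ b → L a ≠ L b)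
    (hpareto : ∀ a : Fin k, sdim (cell L a) = d - 1) :
    ∀ ν ∈ simplexD d,
      ∃ T : InTree (Fin k),
        (∀ e ∈ T.edges, Neighbours L e.1 e.2) ∧
        (∀ e ∈ T.edges, ∑ x, L e.2 x * ν x ≤ ∑ x, L e.1 x * ν x) := by
  classical
  intro ν hν
  set f : Fin k → ℝ := fun c => ∑ x, L c x * ν x with hf
  rcases Nat.lt_or_ge d 2 with hd1 | hd2
  · -- d = 1 : every pair of distinct actions is a neighbour pair
    have hd1' : d = 1 := by omega
    obtain ⟨a₀, -, hmin⟩ := Finset.exists_min_image Finset.univ f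
      ⟨⟨0, hk⟩, Finset.mem_univ _⟩
    refine ⟨⟨a₀, fun _ => a₀, rfl, fun v => ⟨1, rfl⟩⟩, ?_, ?_⟩
    · intro e he
      simp only [InTree.edges, Finset.mem_image, Finset.mem_filter] at he
      obtain ⟨v, ⟨-, hvne⟩, rfl⟩ := he
      refine ⟨hvne, hpareto v, hpareto a₀, ?_⟩
      have h4 := Stmt10Aux.sdim_inter_le hd L (hdup v a₀ hvne)
      show sdim (cell L v ∩ cell L a₀) = d - 2
      omega
    · intro e he
      simp only [InTree.edges, Finset.mem_image, Finset.mem_filter] at he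
      obtain ⟨v, ⟨-, hvne⟩, rfl⟩ := he
      exact hmin v (Finset.mem_univ v)
  · -- d ≥ 2
    obtain ⟨μ, hμs, hμ⟩ := Stmt10Aux.exists_generic hd L hdup
    set h : Fin k → ℝ := fun c => ∑ x, L c x * μ x with hh
    set S : Finset ℝ := ((Finset.univ : Finset (Fin k × Fin k)).filter
        (fun pq => f pq.1 < f pq.2)).image
      (fun pq => (f pq.2 - f pq.1) / (2 * (1 + |h pq.1 - h pq.2|))) with hS
    set ε : ℝ := (insert (1/2 : ℝ) S).min' (Finset.insert_nonempty _ _) with hε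
    have hεS : ∀ y ∈ insert (1/2:ℝ) S, ε ≤ y := fun y hy => Finset.min'_le _ y hy
    have hε0 : 0 < ε := by
      have hmem := Finset.min'_mem (insert (1/2:ℝ) S) (Finset.insert_nonempty _ _)
      rw [← hε] at hmem
      rcases Finset.mem_insert.1 hmem with h' | h'
      · rw [h']; norm_num
      · rw [hS] at h'
        obtain ⟨pq, hpq, hval⟩ := Finset.mem_image.1 h'
        have hlt : f pq.1 < f pq.2 := (Finset.mem_filter.1 hpq).2
        rw [← hval]
        apply div_pos (by linarith) (by positivity)
    have hεhalf : ε ≤ 1/2 := hεS _ (Finset.mem_insert_self _ _)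
    have hkey : ∀ p q : Fin k, f p < f q →
        (1-ε) * f p + ε * h p < (1-ε) * f q + ε * h q := by
      intro p q hpq
      have h1 : ε ≤ (f q - f p) / (2 * (1 + |h p - h q|)) :=
        hεS _ (Finset.mem_insert_of_mem (Finset.mem_image.2
          ⟨(p, q), Finset.mem_filter.2 ⟨Finset.mem_univ _, hpq⟩, rfl⟩))
      have h2 : (0:ℝ) < 2 * (1 + |h p - h q|) := by positivity
      rw [le_div_iff₀ h2] at h1
      have h3 : h p - h q ≤ |h p - h q| := le_abs_self _
      nlinarith [abs_nonneg (h p - h q), mul_pos hε0 h2]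
    set ν' : Fin d → ℝ := fun i => (1-ε) * ν i + ε * μ i with hν'def
    have hν's : ν' ∈ simplexD d :=
      Stmt10Aux.comb_mem_simplex hν hμs (le_of_lt hε0) (by linarith)
    set f' : Fin k → ℝ := fun c => ∑ x, L c x * ν' x with hf'
    have hf'eq : ∀ c, f' c = (1-ε) * f c + ε * h c := by
      intro c
      rw [hf']
      exact Stmt10Aux.sum_mul_comb (L c) ν μ (1-ε) ε
    have hkey' : ∀ p q, f p < f q → f' p < f' q := by
      intro p q hpq
      rw [hf'eq, hf'eq]
      exact hkey p q hpq
    have hdist : ∀ p q : Fin k, p ≠ q → f' p ≠ f' q := by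
      intro p q hpq
      rcases lt_trichotomy (f p) (f q) with h' | h' | h'
      · exact ne_of_lt (hkey' p q h')
      · intro heq
        apply hμ p q hpq
        rw [hf'eq, hf'eq, h'] at heq
        have hhpq : ε * h p = ε * h q := by linarith
        exact mul_left_cancel₀ (ne_of_gt hε0) hhpq
      · exact (ne_of_lt (hkey' q p h')).symm
    obtain ⟨a₀, -, hmin⟩ := Finset.exists_min_image Finset.univ f'
      ⟨⟨0, hk⟩, Finset.mem_univ _⟩
    have hstrict : ∀ c, c ≠ a₀ → f' a₀ < f' c := fun c hc =>
      lt_of_le_of_ne (hmin c (Finset.mem_univ c)) (hdist a₀ c (Ne.symm hc))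
    have hnb : ∀ c : Fin k, c ≠ a₀ → ∃ b, (∑ x, L b x * ν' x) < (∑ x, L c x * ν' x) ∧
        sdim (cell L c ∩ cell L b) = d - 2 := by
      intro c hc
      exact Stmt10Aux.exists_neighbour hd2 L hdup hpareto hν's c ⟨a₀, hstrict c hc⟩
    choose bf hbf1 hbf2 using hnb
    set par : Fin k → Fin k := fun c => if hc : c = a₀ then a₀ else bf c hc with hpar
    have hpar_root : par a₀ = a₀ := by simp [hpar]
    have hdec : ∀ c, c ≠ a₀ → f' (par c) < f' c := by
      intro c hc
      have hpv : par c = bf c hc := by simp [hpar, hc]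
      rw [hpv]
      exact hbf1 c hc
    refine ⟨⟨a₀, par, hpar_root, Stmt10Aux.reaches_of_decr a₀ par f' hdec⟩, ?_, ?_⟩
    · intro e he
      simp only [InTree.edges, Finset.mem_image, Finset.mem_filter] at he
      obtain ⟨v, ⟨-, hvne⟩, rfl⟩ := he
      have hpv : par v = bf v hvne := by simp [hpar, hvne]
      refine ⟨?_, hpareto v, hpareto (par v), ?_⟩
      · intro hvp
        have hvp' : v = par v := hvp
        have h1 := hdec v hvne
        rw [← hvp'] at h1
        exact lt_irrefl _ h1
      · show sdim (cell L v ∩ cell L (par v)) = d - 2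
        rw [hpv]
        exact hbf2 v hvne
    · intro e he
      simp only [InTree.edges, Finset.mem_image, Finset.mem_filter] at he
      obtain ⟨v, ⟨-, hvne⟩, rfl⟩ := he
      by_contra hcon
      push_neg at hcon
      have h1 : f v < f (par v) := hcon
      have h2 := hkey' v (par v) h1
      have h3 := hdec v hvne
      linarith
end

section
/- Let T be an in-tree on [k] and q ∈ ℝ^k a probability vector. Then there exists a probability vector r ∈ ℝ^k such that: (a) r_a ≥ q_a / k for all a ∈ [k]; (b) r is T-increasing, i.e. r_a ≤ r_b for all (a,b) ∈ T; and (c) ⟨r − q, y⟩ ≤ 0 for every T-decreasing vector y ∈ ℝ^k (i.e. every y with y_a ≥ y_b for all (a,b) ∈ T). -/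
/-- Lemma 5: given an in-tree `T` on `[k]` and a probability vector `q`,
there is a probability vector `r` with (a) `r ≥ q/k`, (b) `r` `T`-increasing,
and (c) `⟨r - q, y⟩ ≤ 0` for every `T`-decreasing `y`. -/
theorem stmt11 (k : ℕ) (T : InTree (Fin k))
    (q : Fin k → ℝ) (hq0 : ∀ a, 0 ≤ q a) (hq1 : ∑ a, q a = 1) :
    ∃ r : Fin k → ℝ, (∀ a, 0 ≤ r a) ∧ (∑ a, r a = 1) ∧
      (∀ a, q a / k ≤ r a) ∧
      (∀ e ∈ T.edges, r e.1 ≤ r e.2) ∧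
      (∀ y : Fin k → ℝ, (∀ e ∈ T.edges, y e.2 ≤ y e.1) →
        ∑ a, (r a - q a) * y a ≤ 0) := by
  classical
  rcases Nat.eq_zero_or_pos k with hk | hk
  · exfalso; subst hk; simp at hq1
  set m : Fin k → ℕ := fun a => Nat.find (T.reaches a) with hm
  have hmspec : ∀ a, T.par^[m a] a = T.root := fun a => Nat.find_spec (T.reaches a)
  have hrootfix : ∀ n, T.par^[n] T.root = T.root := fun n => Function.iterate_fixed T.par_root n
  have hge : ∀ a n, m a ≤ n → T.par^[n] a = T.root := by
    intro a n hn
    have h : n = (n - m a) + m a := (Nat.sub_add_cancel hn).symm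
    rw [h, Function.iterate_add_apply, hmspec, hrootfix]
  set P : Fin k → Finset (Fin k) :=
    fun a => (Finset.range (m a + 1)).image (fun n => T.par^[n] a) with hPdef
  have hmemP : ∀ (a : Fin k) (n : ℕ), T.par^[n] a ∈ P a := by
    intro a n
    by_cases h : n ≤ m a
    · exact Finset.mem_image.2 ⟨n, Finset.mem_range.2 (Nat.lt_succ_of_le h), rfl⟩
    · have h1 : T.par^[n] a = T.root := hge a n (le_of_not_ge h)
      have h2 : T.par^[m a] a = T.root := hmspec a
      rw [h1, ← h2]
      exact Finset.mem_image.2 ⟨m a, Finset.mem_range.2 (Nat.lt_succ_self _), rfl⟩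
  have haP : ∀ a, a ∈ P a := fun a => hmemP a 0
  have hparP : ∀ a b, b ∈ P a → T.par b ∈ P a := by
    intro a b hb
    obtain ⟨n, -, rfl⟩ := Finset.mem_image.1 hb
    have h := hmemP a (n + 1)
    rwa [Function.iterate_succ_apply'] at h
  set d : Fin k → ℕ := fun a => (P a).card with hddef
  have hd1 : ∀ a, 1 ≤ d a := fun a => Finset.card_pos.2 ⟨a, haP a⟩
  have hdk : ∀ a, d a ≤ k := by
    intro a
    calc d a ≤ (Finset.univ : Finset (Fin k)).card :=
          Finset.card_le_card (Finset.subset_univ _)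
      _ = k := by simp
  have hdne : ∀ a, (d a : ℝ) ≠ 0 :=
    fun a => Nat.cast_ne_zero.2 (Nat.one_le_iff_ne_zero.1 (hd1 a))
  have hdpos : ∀ a, (0 : ℝ) < (d a : ℝ) := by
    intro a; exact_mod_cast hd1 a
  set c : Fin k → ℝ := fun a => q a / (d a : ℝ) with hcdef
  have hc0 : ∀ a, 0 ≤ c a := fun a => div_nonneg (hq0 a) (Nat.cast_nonneg _)
  have hite0 : ∀ (a b : Fin k), 0 ≤ (if b ∈ P a then c a else 0) := by
    intro a b; by_cases h : b ∈ P a <;> simp [h, hc0 a]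
  refine ⟨fun b => ∑ a, if b ∈ P a then c a else 0, ?_, ?_, ?_, ?_, ?_⟩
  · intro b
    exact Finset.sum_nonneg fun a _ => hite0 a b
  · -- total sum is 1
    have hsb : ∀ a : Fin k, (∑ b, if b ∈ P a then c a else 0) = q a := by
      intro a
      rw [Finset.sum_ite_mem, Finset.univ_inter, Finset.sum_const, nsmul_eq_mul,
        hcdef]
      exact mul_div_cancel₀ (q a) (hdne a)
    rw [Finset.sum_comm]
    simp_rw [hsb]
    exact hq1
  · -- q a / k ≤ r a
    intro a
    have h2 : c a ≤ ∑ a', if a ∈ P a' then c a' else 0 := by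
      have := Finset.single_le_sum (f := fun a' => if a ∈ P a' then c a' else 0)
        (fun a' _ => hite0 a' a) (Finset.mem_univ a)
      simpa [haP a] using this
    refine le_trans ?_ h2
    rw [hcdef]
    have hkd : (d a : ℝ) ≤ (k : ℝ) := by exact_mod_cast hdk a
    exact div_le_div_of_nonneg_left (hq0 a) (hdpos a) hkd
  · -- increasing along edges
    intro e he
    obtain ⟨v, hv, rfl⟩ := Finset.mem_image.1 he
    apply Finset.sum_le_sum
    intro a _
    by_cases h : v ∈ P a
    · simp [h, hparP a v h]
    · simpa [h] using hite0 a (T.par v)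
  · -- inner product inequality
    intro y hy
    have hy1 : ∀ v, y (T.par v) ≤ y v := by
      intro v
      by_cases hv : v = T.root
      · rw [hv, T.par_root]
      · exact hy _ (Finset.mem_image.2
          ⟨v, Finset.mem_filter.2 ⟨Finset.mem_univ v, hv⟩, rfl⟩)
    have hy2 : ∀ (a : Fin k) (n : ℕ), y (T.par^[n] a) ≤ y a := by
      intro a n
      induction n with
      | zero => simp
      | succ n ih =>
        rw [Function.iterate_succ_apply']
        exact le_trans (hy1 _) ih
    have hyP : ∀ a b, b ∈ P a → y b ≤ y a := by
      intro a b hb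
      obtain ⟨n, -, rfl⟩ := Finset.mem_image.1 hb
      exact hy2 a n
    have hry : (∑ b, (∑ a, if b ∈ P a then c a else 0) * y b) ≤ ∑ a, q a * y a := by
      have h1 : (∑ b, (∑ a, if b ∈ P a then c a else 0) * y b)
          = ∑ a, ∑ b ∈ P a, c a * y b := by
        simp_rw [Finset.sum_mul, ite_mul, zero_mul]
        rw [Finset.sum_comm]
        refine Finset.sum_congr rfl fun a _ => ?_
        rw [Finset.sum_ite_mem, Finset.univ_inter]
      rw [h1]
      apply Finset.sum_le_sum
      intro a _
      have h2 : (∑ b ∈ P a, c a * y b) ≤ ∑ b ∈ P a, c a * y a :=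
        Finset.sum_le_sum fun b hb => mul_le_mul_of_nonneg_left (hyP a b hb) (hc0 a)
      refine h2.trans (le_of_eq ?_)
      rw [Finset.sum_const, nsmul_eq_mul, ← mul_assoc, hcdef, mul_comm ((d a : ℝ)),
        div_mul_cancel₀ _ (hdne a)]
    simp_rw [sub_mul]
    rw [Finset.sum_sub_distrib]
    exact sub_nonpos.2 hry
end
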